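/- arXiv:1412.5076 — 4 statements merged into one kernel-verified Lean document; each statement's English description precedes it below -/
import Mathlib

section
/- Let K be a commutative algebra over a field F graded by an abelian group, such that K is a graded field (every nonzero homogeneous element is invertible), the identity homogeneous component equals F, and K is finite-dimensional over F. If K is separable as an F-algebra, then the dimension of K over F is not divisible by the characteristic of F. -/
/-!
Dividing by a nonzero homogeneous element (a unit with a homogeneous inverse) shows that every
nonzero homogeneous component is a line, so `dim_F K` is the order of the support `H ≤ G`. If
`p = char F` divided `|H|`, Cauchy's theorem would give `g ∈ H` of order `p`; a nonzero
`x ∈ K_g` then has `x ^ p ∈ K_0 = F`, so its minimal polynomial divides `X ^ p - c`, whose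
separable degree is one. Separability of `x` forces `x ∈ F = K_0`, contradicting `g ≠ 0`.
-/

open Polynomial in
theorem mem_range_algebraMap_of_isSeparable_of_pow_mem {F K : Type*} [Field F] [Ring K]
    [Nontrivial K] [Algebra F K] (p : ℕ) [ExpChar F p] {x : K} (hx : IsSeparable F x)
    (hxp : x ^ p ∈ (algebraMap F K).range) : x ∈ (algebraMap F K).range := by
  obtain ⟨c, hc⟩ := hxp
  rw [← minpoly.natDegree_eq_one_iff]
  refine le_antisymm ?_ (minpoly.natDegree_pos hx.isIntegral)
  have hdvd : minpoly F x ∣ X ^ p ^ 1 - C c := minpoly.dvd F x (by simp [hc])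
  calc (minpoly F x).natDegree = (minpoly F x).natSepDegree := hx.natSepDegree_eq_natDegree.symm
    _ ≤ (X ^ p ^ 1 - C c).natSepDegree :=
      natSepDegree_le_of_dvd _ _ hdvd (X_pow_sub_C_ne_zero (expChar_pow_pos F p 1) c)
    _ = 1 := natSepDegree_X_pow_char_pow_sub_C p 1 c

theorem DirectSum.IsInternal.finrank_eq_card_ne_bot {ι F V : Type*} [DecidableEq ι]
    [DivisionRing F] [AddCommGroup V] [Module F V] [FiniteDimensional F V]
    {A : ι → Submodule F V} (hA : IsInternal A) (h1 : ∀ i, A i ≠ ⊥ → Module.finrank F (A i) = 1) :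
    Module.finrank F V = Nat.card {i // A i ≠ ⊥} := by
  let b := (isInternal_ne_bot_iff.mpr hA).collectedBasis
    fun i : {i // A i ≠ ⊥} ↦ Module.finBasisOfFinrankEq F (A i) (h1 i i.2)
  rw [Module.finrank_eq_nat_card_basis b]
  exact Nat.card_congr (Equiv.sigmaUnique _ _)

section GradedRing

variable {ι A σ : Type*} [DecidableEq ι] [AddGroup ι] [Semiring A] [SetLike σ A]
  [AddSubmonoidClass σ A] (𝒜 : ι → σ) [GradedRing 𝒜]

theorem GradedRing.exists_mem_neg_mul_eq_one_of_isUnit {i : ι} {x : A} (hx : x ∈ 𝒜 i)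
    (hu : IsUnit x) : ∃ y ∈ 𝒜 (-i), x * y = 1 := by
  refine ⟨DirectSum.decompose 𝒜 (↑hu.unit⁻¹ : A) (-i), SetLike.coe_mem _, ?_⟩
  have h := DirectSum.coe_decompose_mul_add_of_left_mem (𝒜 := 𝒜) (b := (↑hu.unit⁻¹ : A))
    (j := -i) hx
  rwa [IsUnit.mul_val_inv, add_neg_cancel,
    DirectSum.decompose_of_mem_same 𝒜 (SetLike.one_mem_graded 𝒜), eq_comm] at h

end GradedRing

namespace GradedAlgebra

variable {ι F K : Type*} [DecidableEq ι] [Field F] [Ring K] [Algebra F K]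

section AddMonoid

variable [AddMonoid ι] (𝒜 : ι → Submodule F K) [GradedAlgebra 𝒜]

theorem eq_zero_of_char_nsmul_eq_zero [Nontrivial K] [Algebra.IsSeparable F K]
    (h0 : 𝒜 0 = 1) (p : ℕ) [ExpChar F p] {i : ι} (hi : 𝒜 i ≠ ⊥) (hpi : p • i = 0) :
    i = 0 := by
  obtain ⟨x, hx, hx0⟩ := Submodule.exists_mem_ne_zero_of_ne_bot hi
  have hxp : x ^ p ∈ 𝒜 0 := hpi ▸ SetLike.pow_mem_graded p hx
  have hx_deg0 : x ∈ 𝒜 0 := by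
    rw [h0, Submodule.mem_one] at hxp ⊢
    exact mem_range_algebraMap_of_isSeparable_of_pow_mem p
      (Algebra.IsSeparable.isSeparable F x) hxp
  by_contra hi0
  exact hx0 ((DirectSum.decompose_of_mem_same 𝒜 hx_deg0).symm.trans
    (DirectSum.decompose_of_mem_ne 𝒜 hx hi0))

end AddMonoid

variable [AddGroup ι] (𝒜 : ι → Submodule F K) [GradedAlgebra 𝒜]

theorem eq_span_singleton_of_mem (h𝒜 : ∀ i, ∀ x ∈ 𝒜 i, x ≠ 0 → IsUnit x) (h0 : 𝒜 0 = 1)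
    {i : ι} {x : K} (hx : x ∈ 𝒜 i) (hx0 : x ≠ 0) : 𝒜 i = Submodule.span F {x} := by
  obtain ⟨z, hz, hxz⟩ := GradedRing.exists_mem_neg_mul_eq_one_of_isUnit 𝒜 hx (h𝒜 i x hx hx0)
  refine le_antisymm (fun y hy ↦ ?_) ((Submodule.span_singleton_le_iff_mem x _).mpr hx)
  have hzy : z * y ∈ 𝒜 0 := neg_add_cancel i ▸ SetLike.mul_mem_graded hz hy
  obtain ⟨c, hc⟩ := Submodule.mem_one.mp (h0 ▸ hzy)
  have hy_eq : y = c • x := by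
    rw [Algebra.smul_def, Algebra.commutes, hc, ← mul_assoc, hxz, one_mul]
  exact hy_eq ▸ Submodule.smul_mem _ c (Submodule.mem_span_singleton_self x)

theorem finrank_eq_one_of_ne_bot (h𝒜 : ∀ i, ∀ x ∈ 𝒜 i, x ≠ 0 → IsUnit x) (h0 : 𝒜 0 = 1)
    {i : ι} (hi : 𝒜 i ≠ ⊥) : Module.finrank F (𝒜 i) = 1 := by
  obtain ⟨x, hx, hx0⟩ := Submodule.exists_mem_ne_zero_of_ne_bot hi
  rw [eq_span_singleton_of_mem 𝒜 h𝒜 h0 hx hx0, finrank_span_singleton hx0]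

def supportAddSubgroup [Nontrivial K] (h𝒜 : ∀ i, ∀ x ∈ 𝒜 i, x ≠ 0 → IsUnit x) :
    AddSubgroup ι where
  carrier := {i | 𝒜 i ≠ ⊥}
  zero_mem' := Submodule.ne_bot_iff _ |>.mpr ⟨1, SetLike.one_mem_graded 𝒜, one_ne_zero⟩
  add_mem' {i j} hi hj := by
    obtain ⟨x, hx, hx0⟩ := Submodule.exists_mem_ne_zero_of_ne_bot hi
    obtain ⟨y, hy, hy0⟩ := Submodule.exists_mem_ne_zero_of_ne_bot hj
    exact Submodule.ne_bot_iff _ |>.mpr ⟨x * y, SetLike.mul_mem_graded hx hy,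
      fun h ↦ hy0 ((h𝒜 i x hx hx0).mul_right_eq_zero.mp h)⟩
  neg_mem' {i} hi := by
    obtain ⟨x, hx, hx0⟩ := Submodule.exists_mem_ne_zero_of_ne_bot hi
    obtain ⟨z, hz, hxz⟩ := GradedRing.exists_mem_neg_mul_eq_one_of_isUnit 𝒜 hx (h𝒜 i x hx hx0)
    exact Submodule.ne_bot_iff _ |>.mpr ⟨z, hz, right_ne_zero_of_mul_eq_one hxz⟩

theorem finrank_eq_card_supportAddSubgroup [Nontrivial K] [FiniteDimensional F K]
    (h𝒜 : ∀ i, ∀ x ∈ 𝒜 i, x ≠ 0 → IsUnit x) (h0 : 𝒜 0 = 1) :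
    Module.finrank F K = Nat.card (supportAddSubgroup 𝒜 h𝒜) :=
  (DirectSum.Decomposition.isInternal 𝒜).finrank_eq_card_ne_bot
    fun _ ↦ finrank_eq_one_of_ne_bot 𝒜 h𝒜 h0

end GradedAlgebra

/-- A graded field `K` over `F` (identity component `F`, every nonzero
homogeneous element invertible), finite-dimensional over `F`: if `K` is separable
as an `F`-algebra, then `dim_F K` is not divisible by `char F`. -/
theorem graded_field_dim_not_dvd_char
    {F : Type*} [Field F] {G : Type*} [AddCommGroup G] [DecidableEq G]
    {K : Type*} [CommRing K] [Nontrivial K] [Algebra F K]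
    (A : G → Submodule F K)
    (hinternal : DirectSum.IsInternal A)
    (hgmul : ∀ g h : G, ∀ x ∈ A g, ∀ y ∈ A h, x * y ∈ A (g + h))
    (hone : A 0 = Submodule.span F {(1 : K)})
    (hdiv : ∀ g : G, ∀ x ∈ A g, x ≠ 0 → IsUnit x)
    [FiniteDimensional F K]
    (hsep : Algebra.IsSeparable F K) :
    ¬ (ringChar F ∣ Module.finrank F K) := by
  intro hdvd
  have hA0 : A 0 = 1 := hone.trans Submodule.one_eq_span.symm
  let _ : GradedAlgebra A :=
    { hinternal.chooseDecomposition with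
      one_mem := hone ▸ Submodule.mem_span_singleton_self 1
      mul_mem := fun {g h} _ _ hx hy ↦ hgmul g h _ hx _ hy }
  have hcard := GradedAlgebra.finrank_eq_card_supportAddSubgroup A hdiv hA0
  have hpos : Module.finrank F K ≠ 0 := Module.finrank_pos.ne'
  rcases CharP.char_is_prime_or_zero F (ringChar F) with hp | hp
  · have _ : Fact (ringChar F).Prime := ⟨hp⟩
    have _ : Finite (GradedAlgebra.supportAddSubgroup A hdiv) :=
      Nat.finite_of_card_ne_zero (hcard ▸ hpos)
    obtain ⟨g, hg⟩ := exists_prime_addOrderOf_dvd_card' (ringChar F) (hcard ▸ hdvd)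
    have hg0 : (g : G) = 0 :=
      GradedAlgebra.eq_zero_of_char_nsmul_eq_zero A hA0 (ringChar F) g.2
        (by rw [← hg, ← AddSubgroup.coe_nsmul, addOrderOf_nsmul_eq_zero, AddSubgroup.coe_zero])
    rw [show g = 0 from Subtype.ext hg0, addOrderOf_zero] at hg
    exact hp.ne_one hg.symm
  · exact hpos (zero_dvd_iff.mp (hp ▸ hdvd))
end

section
/- Let (V, L, ρ, *, Q) be a cyclic composition algebra over (L, ρ). Then the identities (x*y)*x = ρ²(Q(x))·y and x*(y*x) = ρ(Q(x))·y hold for all x, y in V. -/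
/-- A cyclic composition algebra over `(L, ρ)`: a module `V` over `L` (the scalar
action recorded as `smul`) with an `L`-valued nonsingular quadratic form `Q`
(with polar form `bQ`) and an `F`-bilinear product `mul` which is `ρ`-semilinear
in the first variable and `ρ²`-semilinear in the second, satisfying
`Q(x*y) = ρ(Q x) ρ²(Q y)` and `b_Q(x*y,z) = ρ(b_Q(y*z,x)) = ρ²(b_Q(z*x,y))`. -/
structure CyclicComp (F : Type*) [Field F] (L : Type*) [CommRing L] [Algebra F L]
    (V : Type*) [AddCommGroup V] where
  ρ : L ≃ₐ[F] L
  rho_cube : ∀ ℓ : L, ρ (ρ (ρ ℓ)) = ℓ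
  smul : L → V → V
  smul_add : ∀ (ℓ : L) (x y : V), smul ℓ (x + y) = smul ℓ x + smul ℓ y
  add_smul : ∀ (ℓ m : L) (x : V), smul (ℓ + m) x = smul ℓ x + smul m x
  mul_smul : ∀ (ℓ m : L) (x : V), smul (ℓ * m) x = smul ℓ (smul m x)
  one_smul : ∀ x : V, smul 1 x = x
  mul : V → V → V
  mul_add_left : ∀ x y z : V, mul (x + y) z = mul x z + mul y z
  mul_add_right : ∀ x y z : V, mul x (y + z) = mul x y + mul x z
  mul_smul_left : ∀ (ℓ : L) (x y : V), mul (smul ℓ x) y = smul (ρ ℓ) (mul x y)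
  mul_smul_right : ∀ (ℓ : L) (x y : V), mul x (smul ℓ y) = smul (ρ (ρ ℓ)) (mul x y)
  Q : V → L
  bQ : V → V → L
  bQ_def : ∀ x y : V, bQ x y = Q (x + y) - Q x - Q y
  Q_smul : ∀ (ℓ : L) (x : V), Q (smul ℓ x) = ℓ ^ 2 * Q x
  bQ_smul_left : ∀ (ℓ : L) (x y : V), bQ (smul ℓ x) y = ℓ * bQ x y
  nondeg : ∀ x : V, (∀ y : V, bQ x y = 0) → x = 0
  comp : ∀ x y : V, Q (mul x y) = ρ (Q x) * ρ (ρ (Q y))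
  assoc1 : ∀ x y z : V, bQ (mul x y) z = ρ (bQ (mul y z) x)
  assoc2 : ∀ x y z : V, bQ (mul x y) z = ρ (ρ (bQ (mul z x) y))

namespace CyclicComp

variable {F L V : Type*} [Field F] [CommRing L] [Algebra F L] [AddCommGroup V]
variable (C : CyclicComp F L V)

lemma smul_zero' (x : V) : C.smul 0 x = 0 := by
  have h : C.smul 0 x + C.smul 0 x = C.smul 0 x + 0 := by
    rw [add_zero, ← C.add_smul, add_zero]
  exact add_left_cancel h

lemma neg_smul' (ℓ : L) (x : V) : C.smul (-ℓ) x = -(C.smul ℓ x) := by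
  have h : C.smul (-ℓ) x + C.smul ℓ x = 0 := by
    rw [← C.add_smul, neg_add_cancel, C.smul_zero']
  exact eq_neg_of_add_eq_zero_left h

lemma Q_zero : C.Q 0 = 0 := by
  have h := C.Q_smul 0 0
  rw [C.smul_zero'] at h
  simpa using h

lemma Q_add (x y : V) : C.Q (x + y) = C.Q x + C.Q y + C.bQ x y := by
  rw [C.bQ_def]; ring

lemma bQ_symm (x y : V) : C.bQ x y = C.bQ y x := by
  rw [C.bQ_def, C.bQ_def, add_comm]; ring

lemma bQ_smul_right (ℓ : L) (x y : V) : C.bQ x (C.smul ℓ y) = ℓ * C.bQ x y := by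
  rw [C.bQ_symm, C.bQ_smul_left, C.bQ_symm]

lemma Q_add_smul (u m : V) (t : L) :
    C.Q (u + C.smul t m) = C.Q u + t ^ 2 * C.Q m + t * C.bQ u m := by
  rw [C.Q_add, C.Q_smul, C.bQ_smul_right]

lemma bQ_add_smul (u m : V) (s : L) :
    C.bQ (u + C.smul s m) m = 2 * s * C.Q m + C.bQ u m := by
  rw [C.bQ_def]
  have h1 : u + C.smul s m + m = u + C.smul (s + 1) m := by
    rw [C.add_smul, C.one_smul, add_assoc]
  rw [h1, C.Q_add_smul, C.Q_add_smul]; ring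

lemma comp_linear_right (x y z : V) :
    C.bQ (C.mul x y) (C.mul x z) = C.ρ (C.Q x) * C.ρ (C.ρ (C.bQ y z)) := by
  have h := C.comp x (y + z)
  rw [C.mul_add_right, C.Q_add, C.Q_add, C.comp x y, C.comp x z] at h
  simp only [map_add] at h
  linear_combination h

lemma comp_linear_left (x y z : V) :
    C.bQ (C.mul y x) (C.mul z x) = C.ρ (C.bQ y z) * C.ρ (C.ρ (C.Q x)) := by
  have h := C.comp (y + z) x
  rw [C.mul_add_left, C.Q_add, C.Q_add, C.comp y x, C.comp z x] at h
  simp only [map_add] at h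
  linear_combination h

lemma key1 (x y z : V) :
    C.Q (C.mul (C.mul x y) x + (z - C.smul (C.ρ (C.ρ (C.Q x))) y)) = C.Q z := by
  rw [sub_eq_add_neg, ← C.neg_smul', C.Q_add, C.assoc1, C.mul_add_right,
    C.mul_smul_right, C.bQ_add_smul, C.comp_linear_right, C.Q_add_smul]
  simp only [C.comp, map_add, map_mul, map_neg, map_ofNat, C.rho_cube]
  ring

lemma key2 (x y z : V) :
    C.Q (C.mul x (C.mul y x) + (z - C.smul (C.ρ (C.Q x)) y)) = C.Q z := by
  rw [sub_eq_add_neg, ← C.neg_smul', C.Q_add, C.assoc2, C.mul_add_left,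
    C.mul_smul_left, C.bQ_add_smul, C.comp_linear_left, C.Q_add_smul]
  simp only [C.comp, map_add, map_mul, map_neg, map_ofNat, C.rho_cube]
  ring

end CyclicComp

/-- In a cyclic composition algebra, `(x*y)*x = ρ²(Q(x))·y` and
`x*(y*x) = ρ(Q(x))·y`. -/
theorem cyclicComp_identities
    {F L V : Type*} [Field F] [CommRing L] [Algebra F L] [AddCommGroup V]
    (C : CyclicComp F L V) (x y : V) :
    C.mul (C.mul x y) x = C.smul (C.ρ (C.ρ (C.Q x))) y ∧
      C.mul x (C.mul y x) = C.smul (C.ρ (C.Q x)) y := by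
  constructor
  · set a := C.mul (C.mul x y) x with ha
    set b := C.smul (C.ρ (C.ρ (C.Q x))) y with hb
    have h0 : C.Q (a - b) = 0 := by
      have h := C.key1 x y 0
      rw [show a + (0 - b) = a - b by abel] at h
      rw [h, C.Q_zero]
    have hz : ∀ z, C.bQ (a - b) z = 0 := by
      intro z
      rw [C.bQ_def, h0, show a - b + z = a + (z - b) by abel, C.key1]
      ring
    exact sub_eq_zero.mp (C.nondeg _ hz)
  · set a := C.mul x (C.mul y x) with ha
    set b := C.smul (C.ρ (C.Q x)) y with hb
    have h0 : C.Q (a - b) = 0 := by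
      have h := C.key2 x y 0
      rw [show a + (0 - b) = a - b by abel] at h
      rw [h, C.Q_zero]
    have hz : ∀ z, C.bQ (a - b) z = 0 := by
      intro z
      rw [C.bQ_def, h0, show a - b + z = a + (z - b) by abel, C.key2]
      ring
    exact sub_eq_zero.mp (C.nondeg _ hz)
end

section
/- Let (S, ⋆, n) be a symmetric composition algebra over F and let L = F×F×F with ρ(ℓ₁,ℓ₂,ℓ₃) = (ℓ₂,ℓ₃,ℓ₁). On V = S×S×S define (x₁,x₂,x₃)*(y₁,y₂,y₃) = (x₂⋆y₃, x₃⋆y₁, x₁⋆y₂) and Q = (n,n,n). Then (V, L, ρ, *, Q) is a cyclic composition algebra over (L, ρ). -/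
/-- The cyclic shift automorphism `ρ(ℓ₁,ℓ₂,ℓ₃) = (ℓ₂,ℓ₃,ℓ₁)` of `L = F×F×F`. -/
def cyclicShift (F : Type*) [Field F] : (F × F × F) ≃ₐ[F] (F × F × F) where
  toFun p := (p.2.1, p.2.2, p.1)
  invFun p := (p.2.2, p.1, p.2.1)
  left_inv _ := rfl
  right_inv _ := rfl
  map_mul' _ _ := rfl
  map_add' _ _ := rfl
  commutes' _ := rfl

/-!
Everything is computed componentwise. The only point is the bookkeeping of the cyclic shift:
`ρ`-semilinearity of the product and the composition law hold because the `i`-th component of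
`x * y` involves the components `i + 1` of `x` and `i + 2` of `y`, and the first associativity law
in each component is the cyclic symmetry `n(a ⋆ b, c) = n(b ⋆ c, a)` of a symmetric composition
algebra. The second associativity law is the first one applied twice.
-/

@[simp]
theorem cyclicShift_apply (F : Type*) [Field F] (l : F × F × F) :
    cyclicShift F l = (l.2.1, l.2.2, l.1) :=
  rfl

section Triple

variable {F S : Type*} [Field F] [AddCommGroup S] [Module F S]

def tripleSmul (l : F × F × F) (v : S × S × S) : S × S × S :=
  (l.1 • v.1, l.2.1 • v.2.1, l.2.2 • v.2.2)

def tripleMul (star : S →ₗ[F] S →ₗ[F] S) (x y : S × S × S) : S × S × S :=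
  (star x.2.1 y.2.2, star x.2.2 y.1, star x.1 y.2.1)

def tripleQ (n : QuadraticForm F S) (v : S × S × S) : F × F × F :=
  (n v.1, n v.2.1, n v.2.2)

def triplePolar (n : QuadraticForm F S) (x y : S × S × S) : F × F × F :=
  (QuadraticMap.polar n x.1 y.1, QuadraticMap.polar n x.2.1 y.2.1,
    QuadraticMap.polar n x.2.2 y.2.2)

theorem tripleSmul_add (l : F × F × F) (x y : S × S × S) :
    tripleSmul l (x + y) = tripleSmul l x + tripleSmul l y := by
  simp [tripleSmul]

theorem add_tripleSmul (l m : F × F × F) (x : S × S × S) :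
    tripleSmul (l + m) x = tripleSmul l x + tripleSmul m x := by
  simp [tripleSmul, add_smul]

theorem mul_tripleSmul (l m : F × F × F) (x : S × S × S) :
    tripleSmul (l * m) x = tripleSmul l (tripleSmul m x) := by
  simp [tripleSmul, mul_smul]

theorem one_tripleSmul (x : S × S × S) : tripleSmul (1 : F × F × F) x = x := by
  simp [tripleSmul]

theorem tripleMul_add_left (star : S →ₗ[F] S →ₗ[F] S) (x y z : S × S × S) :
    tripleMul star (x + y) z = tripleMul star x z + tripleMul star y z := by
  simp [tripleMul]

theorem tripleMul_add_right (star : S →ₗ[F] S →ₗ[F] S) (x y z : S × S × S) :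
    tripleMul star x (y + z) = tripleMul star x y + tripleMul star x z := by
  simp [tripleMul]

theorem tripleMul_tripleSmul_left (star : S →ₗ[F] S →ₗ[F] S) (l : F × F × F)
    (x y : S × S × S) :
    tripleMul star (tripleSmul l x) y = tripleSmul (cyclicShift F l) (tripleMul star x y) := by
  simp [tripleMul, tripleSmul]

theorem tripleMul_tripleSmul_right (star : S →ₗ[F] S →ₗ[F] S) (l : F × F × F)
    (x y : S × S × S) :
    tripleMul star x (tripleSmul l y) =
      tripleSmul (cyclicShift F (cyclicShift F l)) (tripleMul star x y) := by
  simp [tripleMul, tripleSmul]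

theorem triplePolar_eq (n : QuadraticForm F S) (x y : S × S × S) :
    triplePolar n x y = tripleQ n (x + y) - tripleQ n x - tripleQ n y :=
  rfl

theorem tripleQ_tripleSmul (n : QuadraticForm F S) (l : F × F × F) (x : S × S × S) :
    tripleQ n (tripleSmul l x) = l ^ 2 * tripleQ n x := by
  simp [Prod.ext_iff, tripleQ, tripleSmul, QuadraticMap.map_smul, sq]

theorem triplePolar_tripleSmul_left (n : QuadraticForm F S) (l : F × F × F)
    (x y : S × S × S) :
    triplePolar n (tripleSmul l x) y = l * triplePolar n x y := by
  simp [Prod.ext_iff, triplePolar, tripleSmul, QuadraticMap.polar_smul_left]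

theorem eq_zero_of_triplePolar_eq_zero {n : QuadraticForm F S}
    (hnd : ∀ x : S, (∀ y : S, QuadraticMap.polar n x y = 0) → x = 0)
    (x : S × S × S) (hx : ∀ y, triplePolar n x y = 0) : x = 0 := by
  ext
  · exact hnd x.1 fun y => congrArg Prod.fst (hx (y, 0, 0))
  · exact hnd x.2.1 fun y => congrArg (Prod.fst ∘ Prod.snd) (hx (0, y, 0))
  · exact hnd x.2.2 fun y => congrArg (Prod.snd ∘ Prod.snd) (hx (0, 0, y))

theorem tripleQ_tripleMul {star : S →ₗ[F] S →ₗ[F] S} {n : QuadraticForm F S}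
    (hmult : ∀ x y : S, n (star x y) = n x * n y) (x y : S × S × S) :
    tripleQ n (tripleMul star x y) =
      cyclicShift F (tripleQ n x) * cyclicShift F (cyclicShift F (tripleQ n y)) := by
  simp [tripleQ, tripleMul, hmult]

theorem polar_star_rotate {star : S →ₗ[F] S →ₗ[F] S} {n : QuadraticForm F S}
    (hassoc : ∀ x y z : S,
      QuadraticMap.polar n (star x y) z = QuadraticMap.polar n x (star y z))
    (a b c : S) :
    QuadraticMap.polar n (star a b) c = QuadraticMap.polar n (star b c) a := by
  rw [hassoc, QuadraticMap.polar_comm]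

theorem triplePolar_tripleMul_rotate {star : S →ₗ[F] S →ₗ[F] S} {n : QuadraticForm F S}
    (hassoc : ∀ x y z : S,
      QuadraticMap.polar n (star x y) z = QuadraticMap.polar n x (star y z))
    (x y z : S × S × S) :
    triplePolar n (tripleMul star x y) z =
      cyclicShift F (triplePolar n (tripleMul star y z) x) := by
  have rotate := polar_star_rotate hassoc
  exact Prod.ext (rotate _ _ _) (Prod.ext (rotate _ _ _) (rotate _ _ _))

end Triple

def CyclicComp.ofSymmetricComp {F S : Type*} [Field F] [AddCommGroup S] [Module F S]
    (star : S →ₗ[F] S →ₗ[F] S) (n : QuadraticForm F S)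
    (hnd : ∀ x : S, (∀ y : S, QuadraticMap.polar n x y = 0) → x = 0)
    (hmult : ∀ x y : S, n (star x y) = n x * n y)
    (hassoc : ∀ x y z : S,
      QuadraticMap.polar n (star x y) z = QuadraticMap.polar n x (star y z)) :
    CyclicComp F (F × F × F) (S × S × S) where
  ρ := cyclicShift F
  rho_cube _ := rfl
  smul := tripleSmul
  smul_add := tripleSmul_add
  add_smul := add_tripleSmul
  mul_smul := mul_tripleSmul
  one_smul := one_tripleSmul
  mul := tripleMul star
  mul_add_left := tripleMul_add_left star
  mul_add_right := tripleMul_add_right star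
  mul_smul_left := tripleMul_tripleSmul_left star
  mul_smul_right := tripleMul_tripleSmul_right star
  Q := tripleQ n
  bQ := triplePolar n
  bQ_def := triplePolar_eq n
  Q_smul := tripleQ_tripleSmul n
  bQ_smul_left := triplePolar_tripleSmul_left n
  nondeg := eq_zero_of_triplePolar_eq_zero hnd
  comp := tripleQ_tripleMul hmult
  assoc1 := triplePolar_tripleMul_rotate hassoc
  assoc2 x y z := (triplePolar_tripleMul_rotate hassoc x y z).trans
    (congrArg _ (triplePolar_tripleMul_rotate hassoc y z x))

theorem symmetricComp_gives_cyclicComp_general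
    {F S : Type*} [Field F] [AddCommGroup S] [Module F S]
    (star : S →ₗ[F] S →ₗ[F] S) (n : QuadraticForm F S)
    (hnd : ∀ x : S, (∀ y : S, QuadraticMap.polar (⇑n) x y = 0) → x = 0)
    (hmult : ∀ x y : S, n (star x y) = n x * n y)
    (hassoc : ∀ x y z : S,
      QuadraticMap.polar (⇑n) (star x y) z = QuadraticMap.polar (⇑n) x (star y z)) :
    ∃ C : CyclicComp F (F × F × F) (S × S × S),
      C.ρ = cyclicShift F ∧
      (∀ (l : F × F × F) (v : S × S × S),
        C.smul l v = (l.1 • v.1, l.2.1 • v.2.1, l.2.2 • v.2.2)) ∧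
      (∀ x y : S × S × S,
        C.mul x y = (star x.2.1 y.2.2, star x.2.2 y.1, star x.1 y.2.1)) ∧
      (∀ v : S × S × S, C.Q v = (n v.1, n v.2.1, n v.2.2)) :=
  ⟨CyclicComp.ofSymmetricComp star n hnd hmult hassoc, rfl, fun _ _ => rfl, fun _ _ => rfl,
    fun _ => rfl⟩

/-- A symmetric composition algebra `(S,⋆,n)` over `F` gives a cyclic
composition algebra on `V = S×S×S` over `(L,ρ) = (F×F×F, shift)` with product
`(x₁,x₂,x₃)*(y₁,y₂,y₃) = (x₂⋆y₃, x₃⋆y₁, x₁⋆y₂)` and `Q = (n,n,n)`. -/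
theorem symmetricComp_gives_cyclicComp
    {F S : Type*} [Field F] [AddCommGroup S] [Module F S] [FiniteDimensional F S]
    (star : S →ₗ[F] S →ₗ[F] S) (n : QuadraticForm F S)
    (hnd : ∀ x : S, (∀ y : S, QuadraticMap.polar (⇑n) x y = 0) → x = 0)
    (hmult : ∀ x y : S, n (star x y) = n x * n y)
    (hassoc : ∀ x y z : S,
      QuadraticMap.polar (⇑n) (star x y) z = QuadraticMap.polar (⇑n) x (star y z)) :
    ∃ C : CyclicComp F (F × F × F) (S × S × S),
      C.ρ = cyclicShift F ∧
      (∀ (l : F × F × F) (v : S × S × S),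
        C.smul l v = (l.1 • v.1, l.2.1 • v.2.1, l.2.2 • v.2.2)) ∧
      (∀ x y : S × S × S,
        C.mul x y = (star x.2.1 y.2.2, star x.2.2 y.1, star x.1 y.2.1)) ∧
      (∀ v : S × S × S, C.Q v = (n v.1, n v.2.1, n v.2.2)) :=
  symmetricComp_gives_cyclicComp_general star n hnd hmult hassoc
end

section
/- Let D be a finite-dimensional graded division algebra over an algebraically closed field F, graded by an abelian group G with support T, and suppose D is semisimple as an ungraded algebra, with center K (a graded field with support H ⊆ T). Then H is precisely the radical of the alternating bicharacter β: T × T → F^× defined by X_s X_t = β(s,t) X_t X_s, and the simple components D₁, ..., D_k of D (k = |H|) are pairwise isomorphic as G/H-graded algebras, each a graded division algebra whose commutation bicharacter is the nondegenerate bicharacter β̄ induced by β on T/H. -/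
/-!
Write `D = F^τ T` with basis `b`. Comparing the coefficients of `b s * z` and `z * b s` shows
that a central element is supported on `H = {t | b t is central}`, so the center is spanned by
the `b h`, `h ∈ H`. Each character `χ : T → Fˣ` gives an automorphism `b t ↦ χ t • b t` of `D`,
which preserves every homogeneous component. Since `F` is algebraically closed, a minimal central
idempotent `e` is detected by an algebra homomorphism `l` from the center to `F` with `l e = 1`.
Two such homomorphisms `l, l'` satisfy the same twisted multiplicativity on the `b h`, so
`h ↦ l (b h) / l' (b h)` is a character of `H`; it extends to `T` because `Fˣ` is divisible.
The resulting automorphism carries `e` to a minimal central idempotent not orthogonal to `f`,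
hence to `f`.
-/

open Module

theorem IsAlgClosed.exists_algHom_apply_eq_one_of_isIdempotentElem {F Z : Type*} [Field F]
    [IsAlgClosed F] [CommRing Z] [Algebra F Z] [Algebra.IsIntegral F Z] {e : Z}
    (he : IsIdempotentElem e) (he0 : e ≠ 0) : ∃ l : Z →ₐ[F] F, l e = 1 := by
  have one_not_mem : (1 : Z) ∉ Ideal.span {1 - e} := fun h => by
    obtain ⟨a, ha⟩ := Ideal.mem_span_singleton'.mp h
    apply he0
    calc e = a * (1 - e) * e := by rw [ha, one_mul]
      _ = 0 := by rw [mul_assoc, sub_mul, one_mul, he.eq, sub_self, mul_zero]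
  obtain ⟨m, hm, hle⟩ := Ideal.exists_le_maximal _ ((Ideal.ne_top_iff_one _).mpr one_not_mem)
  let E := AlgEquiv.ofBijective (Algebra.ofId F (Z ⧸ m))
    IsAlgClosed.algebraMap_bijective_of_isIntegral
  refine ⟨(E.symm : (Z ⧸ m) →ₐ[F] F).comp (Ideal.Quotient.mkₐ F m), ?_⟩
  have : Ideal.Quotient.mk m e = 1 := by
    rw [← map_one (Ideal.Quotient.mk m), Ideal.Quotient.eq]
    exact sub_mem_comm_iff.mp (hle (Ideal.mem_span_singleton_self _))
  simp [this]

theorem IsAlgClosed.exists_monoidHom_units_extension {F T : Type*} [Field F] [IsAlgClosed F]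
    [CommGroup T] (H : Subgroup T) (χ₀ : H →* Fˣ) : ∃ χ : T →* Fˣ, χ.comp H.subtype = χ₀ := by
  let : DivisibleBy (Additive Fˣ) ℕ := divisibleByOfSMulRightSurj _ _ fun {n} hn x => by
    obtain ⟨z, hz⟩ := IsAlgClosed.exists_pow_nat_eq (x.toMul : F) (Nat.pos_of_ne_zero hn)
    refine ⟨Additive.ofMul (Units.mk0 z ?_), Additive.toMul.injective (Units.ext ?_)⟩
    · rintro rfl
      exact x.toMul.ne_zero (by simpa [hn] using hz.symm)
    · simpa using hz
  let := AddGroup.divisibleByIntOfDivisibleByNat (Additive Fˣ)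
  obtain ⟨χ, hχ⟩ := (Module.Baer.of_divisible _).extension_property_addMonoidHom
    H.subtype.toAdditive Subtype.val_injective χ₀.toAdditive
  exact ⟨MonoidHom.toAdditive.symm χ, MonoidHom.toAdditive.injective hχ⟩

theorem exists_monoidHom_eq_div_of_mul_eq {M G : Type*} [Monoid M] [CommGroup G]
    {τ : M → M → G} {ρ ρ' : M → G} (hρ : ∀ s t, ρ s * ρ t = τ s t * ρ (s * t))
    (hρ' : ∀ s t, ρ' s * ρ' t = τ s t * ρ' (s * t)) : ∃ χ : M →* G, ∀ s, χ s = ρ s / ρ' s := by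
  have one_eq {σ : M → G} (hσ : ∀ s t, σ s * σ t = τ s t * σ (s * t)) : σ 1 = τ 1 1 := by
    simpa using hσ 1 1
  refine ⟨{ toFun := fun s => ρ s / ρ' s, map_one' := ?_, map_mul' := fun s t => ?_ },
    fun _ => rfl⟩
  · simp [one_eq hρ, one_eq hρ']
  · rw [div_mul_div_comm, hρ, hρ', mul_div_mul_left_eq_div]

def Submonoid.toSubgroupOfFinite {G : Type*} [Group G] [Finite G] (M : Submonoid G) :
    Subgroup G :=
  { M with
    inv_mem' := fun {g} hg => Submonoid.powers_le.mpr hg <|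
      mem_powers_iff_mem_zpowers.mpr (inv_mem (Subgroup.mem_zpowers g)) }

theorem LinearMap.map_mul_of_basis {R A B ι : Type*} [CommSemiring R] [Semiring A]
    [Algebra R A] [Semiring B] [Algebra R B] (b : Basis ι R A) (f : A →ₗ[R] B)
    (h : ∀ i j, f (b i * b j) = f (b i) * f (b j)) (x y : A) : f (x * y) = f x * f y := by
  have : (LinearMap.mul R A).compr₂ f = (LinearMap.mul R B).compl₁₂ f f :=
    b.ext fun i => b.ext fun j => by simpa using h i j
  exact congr($this x y)

section MinimalCentralIdempotent

variable (F : Type*) {A : Type*} [CommSemiring F] [Semiring A] [Algebra F A]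

def IsMinimalCentralIdempotent (e : A) : Prop :=
  e ∈ Subalgebra.center F A ∧ IsIdempotentElem e ∧ e ≠ 0 ∧
    ∀ e' : A, e' ∈ Subalgebra.center F A → IsIdempotentElem e' → e' * e = e' → e' = 0 ∨ e' = e

variable {F}

theorem IsMinimalCentralIdempotent.map {e : A} (he : IsMinimalCentralIdempotent F e)
    (σ : A ≃ₐ[F] A) : IsMinimalCentralIdempotent F (σ e) := by
  obtain ⟨hcen, hidem, hne, hmin⟩ := he
  refine ⟨MulEquivClass.apply_mem_center σ hcen, hidem.map σ, by simpa using hne,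
    fun e' hcen' hidem' hle => ?_⟩
  have hle' : σ.symm e' * e = σ.symm e' := by
    simpa using congrArg σ.symm hle
  rcases hmin _ (MulEquivClass.apply_mem_center σ.symm hcen') (hidem'.map σ.symm) hle' with h | h
  · exact .inl (by simpa using congrArg σ h)
  · exact .inr (by simpa using congrArg σ h)

theorem IsMinimalCentralIdempotent.eq_of_mul_ne_zero {e f : A}
    (he : IsMinimalCentralIdempotent F e) (hf : IsMinimalCentralIdempotent F f)
    (hef : e * f ≠ 0) : e = f := by
  obtain ⟨hcen, hidem, -, hmin⟩ := he
  obtain ⟨hcen', hidem', -, hmin'⟩ := hf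
  have hcomm : Commute e f := Subalgebra.mem_center_iff.mp hcen' e
  have hcen_ef := mul_mem hcen hcen'
  have hidem_ef : IsIdempotentElem (e * f) := hidem.mul_of_commute hcomm hidem'
  have h1 : e * f = e :=
    (hmin _ hcen_ef hidem_ef (by rw [hcomm.eq, mul_assoc, hidem.eq])).resolve_left hef
  have h2 : e * f = f :=
    (hmin' _ hcen_ef hidem_ef (by rw [mul_assoc, hidem'.eq])).resolve_left hef
  exact h1.symm.trans h2

theorem IsMinimalCentralIdempotent.exists_algHom_apply_eq_one {F : Type*} [Field F]
    [IsAlgClosed F] {A : Type*} [Ring A] [Algebra F A] [FiniteDimensional F A] {e : A}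
    (he : IsMinimalCentralIdempotent F e) :
    ∃ l : Subalgebra.center F A →ₐ[F] F, l ⟨e, he.1⟩ = 1 :=
  IsAlgClosed.exists_algHom_apply_eq_one_of_isIdempotentElem (Subtype.ext he.2.1)
    fun h => he.2.2.1 congr(Subtype.val $h)

end MinimalCentralIdempotent

namespace TwistedGroupAlgebra

variable {F : Type*} [Field F] {T : Type*} {D : Type*} [Ring D] [Algebra F D]
  {τ : T → T → Fˣ} {b : Basis T F D}

section Monoid

variable [Monoid T] (hmul : ∀ s t, b s * b t = (τ s t : F) • b (s * t))
include hmul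

theorem tau_cocycle (s t u : T) : (τ s t * τ (s * t) u : F) = τ t u * τ s (t * u) := by
  refine smul_left_injective F (b.ne_zero (s * t * u)) ?_
  have h1 : b s * b t * b u = (τ s t * τ (s * t) u : F) • b (s * t * u) := by
    rw [hmul, smul_mul_assoc, hmul, smul_smul]
  have h2 : b s * (b t * b u) = (τ t u * τ s (t * u) : F) • b (s * t * u) := by
    rw [hmul, mul_smul_comm, hmul, smul_smul, mul_assoc]
  simp only
  rw [← h1, ← h2, mul_assoc]

theorem basis_one_eq : b 1 = (τ 1 1 : F) • 1 := by
  have tau_one_left (t : T) : (τ 1 t : F) = τ 1 1 := by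
    simpa using (tau_cocycle hmul 1 1 t).symm
  have left_unit : LinearMap.mulLeft F ((τ 1 1 : F)⁻¹ • b 1) = LinearMap.id :=
    b.ext fun t => by simp [hmul, tau_one_left]
  have h := congr($left_unit 1)
  simp only [LinearMap.mulLeft_apply, mul_one, LinearMap.id_coe, id_eq] at h
  rw [← h, smul_smul, mul_inv_cancel₀ (Units.ne_zero _), one_smul]

noncomputable def characterAlgEquiv (χ : T →* Fˣ) : D ≃ₐ[F] D :=
  AlgEquiv.ofLinearEquiv (b.equiv (b.unitsSMul fun t => χ t) (Equiv.refl T))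
    (by
      have h1 : (1 : D) = (τ 1 1 : F)⁻¹ • b 1 := by
        rw [basis_one_eq hmul, smul_smul, inv_mul_cancel₀ (Units.ne_zero _), one_smul]
      rw [h1, map_smul, b.equiv_apply, b.unitsSMul_apply]
      simp)
    (LinearMap.map_mul_of_basis b _ fun s t => by
      simp only [LinearEquiv.coe_coe, hmul, map_smul, b.equiv_apply, b.unitsSMul_apply,
        Equiv.refl_apply, map_mul]
      rw [smul_mul_smul_comm, hmul, smul_comm])

theorem characterAlgEquiv_basis (χ : T →* Fˣ) (t : T) :
    characterAlgEquiv hmul χ (b t) = (χ t : F) • b t := by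
  simp [characterAlgEquiv, b.equiv_apply, b.unitsSMul_apply, Units.smul_def]

theorem characterAlgEquiv_image_homogeneous (χ : T →* Fˣ) (P : T → Prop) :
    characterAlgEquiv hmul χ '' {d | ∃ s, P s ∧ ∃ c : F, d = c • b s} =
      {d | ∃ s, P s ∧ ∃ c : F, d = c • b s} := by
  ext d
  constructor
  · rintro ⟨-, ⟨s, hs, c, rfl⟩, rfl⟩
    exact ⟨s, hs, c * χ s, by rw [map_smul, characterAlgEquiv_basis, smul_smul]⟩
  · rintro ⟨s, hs, c, rfl⟩
    refine ⟨(c * (χ s : F)⁻¹) • b s, ⟨s, hs, _, rfl⟩, ?_⟩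
    rw [map_smul, characterAlgEquiv_basis, smul_smul, inv_mul_cancel_right₀ (Units.ne_zero _)]

end Monoid

section CommMonoid

variable [CommMonoid T] (hmul : ∀ s t, b s * b t = (τ s t : F) • b (s * t))
include hmul

theorem basis_mul_comm (s t : T) :
    b s * b t = ((τ s t : F) * (τ t s : F)⁻¹) • (b t * b s) := by
  rw [hmul, hmul, smul_smul, mul_comm t s, inv_mul_cancel_right₀ (Units.ne_zero _)]

theorem basis_mem_center_iff (t : T) :
    b t ∈ Subalgebra.center F D ↔ ∀ s, τ t s = τ s t := by
  refine ⟨fun ht s => Units.ext <| smul_left_injective F (b.ne_zero (t * s)) ?_, fun h => ?_⟩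
  · have := Subalgebra.mem_center_iff.mp ht (b s)
    simp only
    rwa [hmul, hmul, mul_comm s t, eq_comm] at this
  · have : LinearMap.mulLeft F (b t) = LinearMap.mulRight F (b t) :=
      b.ext fun s => by simp [hmul, mul_comm s t, h s]
    exact Subalgebra.mem_center_iff.mpr fun d => congr($this d).symm

end CommMonoid

section CancelMonoid

variable [CancelMonoid T] (hmul : ∀ s t, b s * b t = (τ s t : F) • b (s * t))
include hmul

theorem repr_basis_mul (s t : T) (z : D) :
    b.repr (b s * z) (s * t) = τ s t * b.repr z t := by
  have : (b.coord (s * t)).comp (LinearMap.mulLeft F (b s)) = (τ s t : F) • b.coord t :=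
    b.ext fun u => by
      by_cases hu : u = t
      · simp [hu, hmul]
      · simp [hmul, Ne.symm hu]
  exact congr($this z)

theorem repr_mul_basis (s t : T) (z : D) :
    b.repr (z * b s) (t * s) = b.repr z t * τ t s := by
  have : (b.coord (t * s)).comp (LinearMap.mulRight F (b s)) = (τ t s : F) • b.coord t :=
    b.ext fun u => by
      by_cases hu : u = t
      · simp [hu, hmul]
      · simp [hmul, Ne.symm hu]
  simpa [mul_comm] using congr($this z)

end CancelMonoid

section CommGroup

variable [CommGroup T] (hmul : ∀ s t, b s * b t = (τ s t : F) • b (s * t))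
include hmul

theorem basis_mem_center_of_repr_ne_zero {z : D} (hz : z ∈ Subalgebra.center F D) {t : T}
    (ht : b.repr z t ≠ 0) : b t ∈ Subalgebra.center F D := by
  refine (basis_mem_center_iff hmul t).mpr fun s => Units.ext (mul_left_cancel₀ ht ?_)
  have := congr(b.repr $(Subalgebra.mem_center_iff.mp hz (b s)) (s * t))
  rw [repr_basis_mul hmul, mul_comm s t, repr_mul_basis hmul] at this
  rw [← this, mul_comm]

variable [Finite T]

def centerSupport : Subgroup T :=
  Submonoid.toSubgroupOfFinite
    { carrier := {t | b t ∈ Subalgebra.center F D}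
      one_mem' := by
        rw [Set.mem_ofPred_eq, basis_one_eq hmul]
        exact Subalgebra.smul_mem _ (one_mem _) _
      mul_mem' := fun {s t} hs ht => by
        have : b (s * t) = (τ s t : F)⁻¹ • (b s * b t) := by
          rw [hmul, smul_smul, inv_mul_cancel₀ (Units.ne_zero _), one_smul]
        rw [Set.mem_ofPred_eq, this]
        exact Subalgebra.smul_mem _ (mul_mem hs ht) _ }

noncomputable def centerBasis (h : centerSupport hmul) : Subalgebra.center F D := ⟨b h, h.2⟩

theorem centerBasis_mul (s t : centerSupport hmul) :
    centerBasis hmul s * centerBasis hmul t = (τ s t : F) • centerBasis hmul (s * t) :=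
  Subtype.ext (hmul s t)

theorem centerBasis_one : centerBasis hmul 1 = (τ 1 1 : F) • 1 :=
  Subtype.ext (basis_one_eq hmul)

theorem algHom_centerBasis_ne_zero (l : Subalgebra.center F D →ₐ[F] F)
    (h : centerSupport hmul) : l (centerBasis hmul h) ≠ 0 := by
  have := congr(l $(centerBasis_mul hmul h h⁻¹))
  rw [mul_inv_cancel, centerBasis_one, map_mul, smul_smul, map_smul, map_one, smul_eq_mul,
    mul_one] at this
  exact left_ne_zero_of_mul (this ▸ mul_ne_zero (Units.ne_zero _) (Units.ne_zero _))

theorem span_range_centerBasis : Submodule.span F (Set.range (centerBasis hmul)) = ⊤ := by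
  let ι := (Subalgebra.center F D).val.toLinearMap
  refine top_unique
    ((Submodule.map_le_map_iff_of_injective (f := ι) Subtype.val_injective _ _).mp ?_)
  rintro _ ⟨z, -, rfl⟩
  rw [Submodule.map_span, ← Set.range_comp]
  have : ι ∘ centerBasis hmul = b ∘ ((↑) : centerSupport hmul → T) := rfl
  rw [this, Set.range_comp, Subtype.range_coe]
  exact b.mem_span_image.mpr fun t ht =>
    basis_mem_center_of_repr_ne_zero hmul z.2 (Finsupp.mem_support_iff.mp ht)

variable [IsAlgClosed F]

theorem exists_algHom_comp_characterAlgEquiv_eq (l l' : Subalgebra.center F D →ₐ[F] F) :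
    ∃ χ : T →* Fˣ, ∀ z (hz : z ∈ Subalgebra.center F D),
      l' ⟨characterAlgEquiv hmul χ z, MulEquivClass.apply_mem_center _ hz⟩ = l ⟨z, hz⟩ := by
  let ρ (l : Subalgebra.center F D →ₐ[F] F) (h : centerSupport hmul) : Fˣ :=
    Units.mk0 _ (algHom_centerBasis_ne_zero hmul l h)
  have hρ (l) (s t) : ρ l s * ρ l t = τ s t * ρ l (s * t) :=
    Units.ext (by simp [ρ, ← map_mul, centerBasis_mul])
  obtain ⟨χ₀, hχ₀⟩ := exists_monoidHom_eq_div_of_mul_eq (hρ l) (hρ l')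
  obtain ⟨χ, hχ⟩ := IsAlgClosed.exists_monoidHom_units_extension _ χ₀
  refine ⟨χ, fun z hz => ?_⟩
  let σ : Subalgebra.center F D →ₐ[F] Subalgebra.center F D :=
    ((characterAlgEquiv hmul χ : D →ₐ[F] D).comp (Subalgebra.center F D).val).codRestrict _
      fun z => MulEquivClass.apply_mem_center (characterAlgEquiv hmul χ) z.2
  have : (l'.comp σ).toLinearMap = l.toLinearMap :=
    LinearMap.ext_on_range (span_range_centerBasis hmul) fun h => by
      have hσ : σ (centerBasis hmul h) = (χ h : F) • centerBasis hmul h :=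
        Subtype.ext (characterAlgEquiv_basis hmul χ h)
      have hχh : (χ h : F) = l (centerBasis hmul h) / l' (centerBasis hmul h) := by
        simpa [hχ₀, ρ] using congr(($hχ h : F))
      simp [hσ, hχh, algHom_centerBasis_ne_zero]
  exact congr($this ⟨z, hz⟩)

theorem exists_characterAlgEquiv_apply_eq [FiniteDimensional F D] {e f : D}
    (he : IsMinimalCentralIdempotent F e) (hf : IsMinimalCentralIdempotent F f) :
    ∃ χ : T →* Fˣ, characterAlgEquiv hmul χ e = f := by
  obtain ⟨le, hle⟩ := he.exists_algHom_apply_eq_one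
  obtain ⟨lf, hlf⟩ := hf.exists_algHom_apply_eq_one
  obtain ⟨χ, hχ⟩ := exists_algHom_comp_characterAlgEquiv_eq hmul le lf
  have hσe := he.map (characterAlgEquiv hmul χ)
  have h1 : lf (⟨_, hσe.1⟩ * ⟨f, hf.1⟩) = 1 := by rw [map_mul, hχ e he.1, hle, hlf, one_mul]
  refine ⟨χ, hσe.eq_of_mul_ne_zero hf fun h0 => zero_ne_one (α := F) ?_⟩
  rwa [show (⟨_, hσe.1⟩ * ⟨f, hf.1⟩ : Subalgebra.center F D) = 0 from Subtype.ext h0,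
    map_zero] at h1

end CommGroup

end TwistedGroupAlgebra

theorem graded_division_algebra_semisimple_structure_general
    {F : Type*} [Field F] [IsAlgClosed F] {T : Type*} [CommGroup T] [Fintype T]
    {D : Type*} [Ring D] [Algebra F D] [FiniteDimensional F D]
    (τ : T → T → Fˣ) (X : T → D) (b : Module.Basis T F D) (hb : ∀ t, b t = X t)
    (hmul : ∀ s t : T, X s * X t = (τ s t : F) • X (s * t)) :
    (∀ t : T, X t ∈ Subalgebra.center F D ↔ ∀ s : T, τ t s = τ s t) ∧
      (∀ s t : T, X s * X t = ((τ s t : F) * (τ t s : F)⁻¹) • (X t * X s)) ∧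
      ∀ e f : D,
        (e ∈ Subalgebra.center F D ∧ IsIdempotentElem e ∧ e ≠ 0 ∧
          ∀ e' : D, e' ∈ Subalgebra.center F D → IsIdempotentElem e' →
            e' * e = e' → e' = 0 ∨ e' = e) →
        (f ∈ Subalgebra.center F D ∧ IsIdempotentElem f ∧ f ≠ 0 ∧
          ∀ f' : D, f' ∈ Subalgebra.center F D → IsIdempotentElem f' →
            f' * f = f' → f' = 0 ∨ f' = f) →
        ∃ σ : D ≃ₐ[F] D, σ e = f ∧
          ∀ t : T, Submodule.map σ.toLinearMap
              (Submodule.span F {d : D | ∃ s : T,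
                X (s * t⁻¹) ∈ Subalgebra.center F D ∧ ∃ c : F, d = c • X s})
            = Submodule.span F {d : D | ∃ s : T,
                X (s * t⁻¹) ∈ Subalgebra.center F D ∧ ∃ c : F, d = c • X s} := by
  obtain rfl : ⇑b = X := funext hb
  refine ⟨TwistedGroupAlgebra.basis_mem_center_iff hmul, TwistedGroupAlgebra.basis_mul_comm hmul,
    fun e f he hf => ?_⟩
  obtain ⟨χ, hχ⟩ := TwistedGroupAlgebra.exists_characterAlgEquiv_apply_eq hmul he hf
  refine ⟨TwistedGroupAlgebra.characterAlgEquiv hmul χ, hχ, fun t => ?_⟩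
  rw [Submodule.map_span]
  exact congrArg _ (TwistedGroupAlgebra.characterAlgEquiv_image_homogeneous hmul χ _)

/-- Let `D = F^τ T` be a finite-dimensional graded division algebra
over an algebraically closed field `F` (support `T`, basis `X_t`,
`X_s X_t = τ(s,t) X_{st}`), semisimple as an ungraded algebra.  Then the support
`H` of the center is precisely the radical of the commutation bicharacter
`β(s,t) = τ(s,t)/τ(t,s)` (i.e. `X_t` is central iff `τ(t,s) = τ(s,t)` for all
`s`), homogeneous elements commute up to `β`, and the simple components (cut out
by minimal central idempotents) are pairwise isomorphic as `G/H`-graded algebras: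
for any two minimal central idempotents `e, f` there is an algebra automorphism
of `D` carrying `e` to `f` and preserving each `T/H`-homogeneous component
(the span of the `X_s` with `s` in a fixed coset mod `H`). -/
theorem graded_division_algebra_semisimple_structure
    {F : Type*} [Field F] [IsAlgClosed F] {T : Type*} [CommGroup T] [Fintype T]
    {D : Type*} [Ring D] [Algebra F D] [FiniteDimensional F D]
    (τ : T → T → Fˣ) (X : T → D) (b : Module.Basis T F D) (hb : ∀ t, b t = X t)
    (hmul : ∀ s t : T, X s * X t = (τ s t : F) • X (s * t))
    (hss : IsSemisimpleRing D) :
    (∀ t : T, X t ∈ Subalgebra.center F D ↔ ∀ s : T, τ t s = τ s t) ∧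
      (∀ s t : T, X s * X t = ((τ s t : F) * (τ t s : F)⁻¹) • (X t * X s)) ∧
      ∀ e f : D,
        (e ∈ Subalgebra.center F D ∧ IsIdempotentElem e ∧ e ≠ 0 ∧
          ∀ e' : D, e' ∈ Subalgebra.center F D → IsIdempotentElem e' →
            e' * e = e' → e' = 0 ∨ e' = e) →
        (f ∈ Subalgebra.center F D ∧ IsIdempotentElem f ∧ f ≠ 0 ∧
          ∀ f' : D, f' ∈ Subalgebra.center F D → IsIdempotentElem f' →
            f' * f = f' → f' = 0 ∨ f' = f) →
        ∃ σ : D ≃ₐ[F] D, σ e = f ∧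
          ∀ t : T, Submodule.map σ.toLinearMap
              (Submodule.span F {d : D | ∃ s : T,
                X (s * t⁻¹) ∈ Subalgebra.center F D ∧ ∃ c : F, d = c • X s})
            = Submodule.span F {d : D | ∃ s : T,
                X (s * t⁻¹) ∈ Subalgebra.center F D ∧ ∃ c : F, d = c • X s} :=
  graded_division_algebra_semisimple_structure_general τ X b hb hmul
end
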